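/- arXiv:2308.02978 — 7 statements merged into one kernel-verified Lean document; each statement's English description precedes it below -/
import Mathlib

section
/- Let Γ be a Conway 99-graph, let x be a vertex of Γ, and let g be an automorphism of Γ such that g(x) = x and g(y) = y for every neighbor y of x. Then g is the identity automorphism. -/
/-- If an automorphism `g` of a Conway 99-graph fixes a vertex `x` and all of
its neighbors, then `g` is the identity automorphism. -/
theorem stmt_2 {V : Type*} [Fintype V] (G : SimpleGraph V) [DecidableRel G.Adj]
    (h : G.IsSRGWith 99 14 1 2)
    (x : V) (g : G ≃g G) (hx : g x = x) (hn : ∀ y, G.Adj x y → g y = y) :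
    g = 1 := by
  classical
  have key : ∀ v, g v = v := by
    intro v
    by_cases hvx : v = x
    · rw [hvx, hx]
    by_cases hadj : G.Adj x v
    · exact hn v hadj
    -- main case: v ≠ x, not adjacent to x
    have hcard : Fintype.card (G.commonNeighbors x v) = 2 :=
      h.of_not_adj (fun e => hvx e.symm) hadj
    obtain ⟨a, b, hab, hS⟩ : ∃ a b, a ≠ b ∧ (G.commonNeighbors x v).toFinset = {a, b} :=
      Finset.card_eq_two.mp (by rw [Set.toFinset_card, hcard])
    have ha : a ∈ G.commonNeighbors x v := by
      rw [← Set.mem_toFinset, hS]; simp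
    have hb : b ∈ G.commonNeighbors x v := by
      rw [← Set.mem_toFinset, hS]; simp
    rw [SimpleGraph.mem_commonNeighbors] at ha hb
    obtain ⟨hxa, hva⟩ := ha
    obtain ⟨hxb, hvb⟩ := hb
    have hxmem : x ∈ G.commonNeighbors a b :=
      (SimpleGraph.mem_commonNeighbors G).mpr ⟨hxa.symm, hxb.symm⟩
    have hvmem : v ∈ G.commonNeighbors a b :=
      (SimpleGraph.mem_commonNeighbors G).mpr ⟨hva.symm, hvb.symm⟩
    have hsub : ({x, v} : Finset V) ⊆ (G.commonNeighbors a b).toFinset := by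
      intro z hz
      rw [Finset.mem_insert, Finset.mem_singleton] at hz
      rcases hz with rfl | rfl
      · exact Set.mem_toFinset.mpr hxmem
      · exact Set.mem_toFinset.mpr hvmem
    have hcard2 : ({x, v} : Finset V).card = 2 := by
      rw [Finset.card_insert_of_notMem (by simpa using fun e => hvx e.symm),
        Finset.card_singleton]
    have hnab : ¬ G.Adj a b := by
      intro hadj'
      have h1 := h.of_adj a b hadj'
      have := Finset.card_le_card hsub
      rw [hcard2, Set.toFinset_card, h1] at this
      omega
    have h2 : Fintype.card (G.commonNeighbors a b) = 2 := h.of_not_adj hab hnab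
    have heq : (G.commonNeighbors a b).toFinset = {x, v} := by
      refine (Finset.eq_of_subset_of_card_le hsub ?_).symm
      rw [hcard2, Set.toFinset_card, h2]
    have hga : g a = a := hn a hxa
    have hgb : g b = b := hn b hxb
    have hgv : g v ∈ G.commonNeighbors a b := by
      refine (SimpleGraph.mem_commonNeighbors G).mpr ⟨?_, ?_⟩
      · have := g.map_adj_iff.mpr hva.symm
        rwa [hga] at this
      · have := g.map_adj_iff.mpr hvb.symm
        rwa [hgb] at this
    have := Set.mem_toFinset.mpr hgv
    rw [heq, Finset.mem_insert, Finset.mem_singleton] at this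
    rcases this with hgx | hgv'
    · exact absurd (g.injective (hgx.trans hx.symm)) hvx
    · exact hgv'
  exact DFunLike.ext g 1 key
end

section
/- Let Γ be a Conway 99-graph and let g be an automorphism of Γ of order 7. Then g fixes exactly one vertex of Γ; consequently every orbit of the cyclic group ⟨g⟩ on the vertex set, other than the singleton orbit of the fixed vertex, has exactly 7 elements. -/
/-!
Let `F` be the set of fixed points of `g`. The orbits of `⟨g⟩` have size `1` or `7`, so
`|F| ≡ 99 ≡ 1 (mod 7)` and `|N(x) ∩ F| ≡ 14 ≡ 0 (mod 7)` for `x ∈ F`. Two distinct fixed vertices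
have at most two common neighbours, and `g` fixes pointwise every invariant set of fewer than `7`
points, so inside `F` adjacent vertices still have one and non-adjacent ones two common neighbours.
If `|F| > 1` this forces `|N(x) ∩ F| ∈ {7, 14}` for `x ∈ F`, and counting paths of length two in `F`
gives `∑_{x ∈ F} |N(x) ∩ F|² = 2|F|(|F| - 1)`; modulo `147` no `|F| < 99` satisfies this.
Finally, a point moved by an element of prime order `7` has minimal period `7`.
-/

open Finset

theorem Nat.not_modEq_147_of_lt_99 :
    ∀ f < 99, f ≡ 1 [MOD 7] → ¬ f * (2 * (f - 1)) ≡ 49 * f [MOD 147] := by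
  decide

namespace Equiv.Perm

variable {α : Type*} {σ : Perm α} {p : ℕ} [Fact p.Prime]

theorem ncard_zpowers_orbit (hσ : σ ^ p = 1) {v : α} (hv : σ v ≠ v) :
    {w | ∃ n : ℤ, (σ ^ n) v = w}.ncard = p := by
  have horbit : {w | ∃ n : ℤ, (σ ^ n) v = w} = MulAction.orbit (Subgroup.zpowers σ) v := by
    ext w
    simp only [Set.mem_ofPred_eq, MulAction.mem_orbit_iff, Subgroup.exists_zpowers]
    rfl
  have hper : Function.minimalPeriod (σ • ·) v = p := by
    refine Function.minimalPeriod_eq_prime ?_ (by simpa [Function.IsFixedPt] using hv)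
    rw [Function.IsPeriodicPt, Function.IsFixedPt, smul_iterate, hσ]
    exact one_smul _ v
  rw [horbit, ← Nat.card_coe_set_eq, Nat.card_congr (MulAction.orbitZPowersEquiv σ v),
    Nat.card_zmod, hper]

variable [DecidableEq α]

theorem card_filter_apply_eq_self_modEq (hσ : σ ^ p = 1) {s : Finset α}
    (hs : ∀ x, σ x ∈ s ↔ x ∈ s) : #{x ∈ s | σ x = x} ≡ #s [MOD p] := by
  set τ := σ.subtypePerm hs
  have hτ : τ ^ p ^ 1 = 1 := by
    ext x
    simp [τ, subtypePerm_pow, hσ]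
  have hfix : {x ∈ s | σ x = x} = τ.supportᶜ.map (Function.Embedding.subtype _) := by
    ext x
    simp [τ, and_comm]
  simpa [hfix] using card_compl_support_modEq hτ

theorem apply_eq_self_of_card_lt (hσ : σ ^ p = 1) {s : Finset α}
    (hs : ∀ x, σ x ∈ s ↔ x ∈ s) (hcard : #s < p) {x : α} (hx : x ∈ s) : σ x = x := by
  have heq : #{x ∈ s | σ x = x} = #s :=
    (card_filter_apply_eq_self_modEq hσ hs).eq_of_lt_of_lt
      ((card_filter_le _ _).trans_lt hcard) hcard
  exact card_filter_eq_iff.1 heq x hx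

end Equiv.Perm

namespace SimpleGraph

variable {V : Type*}

/-- The common-neighbour conditions of a strongly regular graph with `λ = μ - 1`, counted inside
`F`: distinct vertices of `F` have `μ` common neighbours in `F`, one fewer if they are adjacent. -/
def IsPairRegularOn (G : SimpleGraph V) [DecidableRel G.Adj] (F : Finset V) (μ : ℕ) : Prop :=
  ∀ u ∈ F, ∀ v ∈ F, u ≠ v →
    #{x ∈ F | G.Adj u x ∧ G.Adj v x} + (if G.Adj u v then 1 else 0) = μ

variable {G : SimpleGraph V}

section PairRegular

variable [DecidableRel G.Adj] {F : Finset V} {μ : ℕ}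

theorem IsPairRegularOn.card_filter_adj_ne_zero (hF : G.IsPairRegularOn F μ) (hμ : μ ≠ 0)
    {u v : V} (hu : u ∈ F) (hv : v ∈ F) (huv : u ≠ v) : #{x ∈ F | G.Adj u x} ≠ 0 := by
  intro h0
  have hempty : ∀ x ∈ F, ¬ G.Adj u x := by simpa [filter_eq_empty_iff] using h0
  have := hF u hu v hv huv
  rw [if_neg (hempty v hv), filter_false_of_mem fun x hx h => hempty x hx h.1] at this
  simp_all

variable [DecidableEq V]

theorem IsPairRegularOn.sum_card_filter_adj_and_adj (hF : G.IsPairRegularOn F μ) {u : V}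
    (hu : u ∈ F) : ∑ v ∈ F, #{x ∈ F | G.Adj u x ∧ G.Adj v x} = μ * (#F - 1) := by
  have hadd : ∑ v ∈ F, (#{x ∈ F | G.Adj u x ∧ G.Adj v x} + if G.Adj u v then 1 else 0)
      = #{x ∈ F | G.Adj u x} + μ * (#F - 1) := by
    rw [← add_sum_erase F _ hu, sum_congr rfl fun v hv => hF u hu v (mem_erase.1 hv).2
      (mem_erase.1 hv).1.symm]
    simp [card_erase_of_mem hu, mul_comm]
  rw [sum_add_distrib, ← card_filter] at hadd
  omega

theorem IsPairRegularOn.sum_card_filter_adj_sq (hF : G.IsPairRegularOn F μ) :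
    ∑ x ∈ F, #{y ∈ F | G.Adj x y} ^ 2 = #F * (μ * (#F - 1)) := by
  calc ∑ x ∈ F, #{y ∈ F | G.Adj x y} ^ 2
      = ∑ x ∈ F, ∑ u ∈ F, ∑ v ∈ F, if G.Adj u x ∧ G.Adj v x then 1 else 0 := by
        refine sum_congr rfl fun x _ => ?_
        simp only [sq, card_filter, sum_mul_sum, ite_zero_mul_ite_zero, mul_one, G.adj_comm x]
    _ = ∑ u ∈ F, ∑ v ∈ F, #{x ∈ F | G.Adj u x ∧ G.Adj v x} := by
        rw [sum_comm]
        refine sum_congr rfl fun u _ => ?_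
        rw [sum_comm]
        simp only [card_filter]
    _ = #F * (μ * (#F - 1)) := by
        rw [sum_congr rfl fun u hu => hF.sum_card_filter_adj_and_adj hu, sum_const, smul_eq_mul]

end PairRegular

namespace Iso

def toPermHom : (G ≃g G) →* Equiv.Perm V where
  toFun g := g.toEquiv
  map_one' := rfl
  map_mul' _ _ := rfl

@[simp]
theorem toPermHom_apply (g : G ≃g G) (x : V) : toPermHom g x = g x := rfl

theorem toPermHom_pow_eq_one {g : G ≃g G} {n : ℕ} (hg : g ^ n = 1) : toPermHom g ^ n = 1 := by
  rw [← map_pow, hg, map_one]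

variable [Fintype V] [DecidableEq V]

def fixedFinset (g : G ≃g G) : Finset V := {x | g x = x}

@[simp]
theorem mem_fixedFinset {g : G ≃g G} {x : V} : x ∈ g.fixedFinset ↔ g x = x := by
  simp [fixedFinset]

variable {p : ℕ} [Fact p.Prime] {g : G ≃g G}

theorem card_fixedFinset_modEq (hg : g ^ p = 1) : #g.fixedFinset ≡ Fintype.card V [MOD p] :=
  Equiv.Perm.card_filter_apply_eq_self_modEq (toPermHom_pow_eq_one hg) (s := univ) (by simp)

theorem card_fixedFinset_lt (hg : g ≠ 1) : #g.fixedFinset < Fintype.card V := by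
  obtain ⟨x, hx⟩ : ∃ x, g x ≠ x := by
    by_contra! hfix
    exact hg (RelIso.ext hfix)
  exact card_lt_univ_of_notMem (by simpa using hx)

variable [DecidableRel G.Adj]

theorem card_filter_adj_modEq_degree (hg : g ^ p = 1) {x : V} (hx : g x = x) :
    #{y ∈ g.fixedFinset | G.Adj x y} ≡ G.degree x [MOD p] := by
  have hfilter : {y ∈ g.fixedFinset | G.Adj x y} = {y ∈ G.neighborFinset x | g y = y} := by
    ext y
    simp [and_comm]
  rw [hfilter, ← card_neighborFinset_eq_degree]
  refine Equiv.Perm.card_filter_apply_eq_self_modEq (σ := toPermHom g) (toPermHom_pow_eq_one hg)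
    fun y => ?_
  simpa [hx] using g.map_adj_iff (v := x) (w := y)

theorem apply_eq_self_of_mem_commonNeighbors (hg : g ^ p = 1) {u v w : V} (hu : g u = u)
    (hv : g v = v) (hcard : Fintype.card (G.commonNeighbors u v) < p)
    (hw : w ∈ G.commonNeighbors u v) : g w = w := by
  refine Equiv.Perm.apply_eq_self_of_card_lt (toPermHom_pow_eq_one hg)
    (s := (G.commonNeighbors u v).toFinset) (fun x => ?_) (by rwa [Set.toFinset_card])
    (by simpa using hw)
  simpa [hu, hv, mem_commonNeighbors] using
    and_congr (g.map_adj_iff (v := u) (w := x)) (g.map_adj_iff (v := v) (w := x))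

theorem filter_adj_and_adj_eq_commonNeighbors (hg : g ^ p = 1) {u v : V} (hu : g u = u)
    (hv : g v = v) (hcard : Fintype.card (G.commonNeighbors u v) < p) :
    {x ∈ g.fixedFinset | G.Adj u x ∧ G.Adj v x} = (G.commonNeighbors u v).toFinset := by
  ext x
  simp only [mem_filter, mem_fixedFinset, Set.mem_toFinset, mem_commonNeighbors,
    and_iff_right_iff_imp]
  exact fun hx => apply_eq_self_of_mem_commonNeighbors hg hu hv hcard (G.mem_commonNeighbors.2 hx)

theorem card_filter_adj_eq_or_eq (hreg : G.IsRegularOfDegree (2 * p)) (hg : g ^ p = 1)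
    {μ : ℕ} (hF : G.IsPairRegularOn g.fixedFinset μ) (hμ : μ ≠ 0) {x y : V}
    (hx : x ∈ g.fixedFinset) (hy : y ∈ g.fixedFinset) (hxy : x ≠ y) :
    #{z ∈ g.fixedFinset | G.Adj x z} = p ∨ #{z ∈ g.fixedFinset | G.Adj x z} = 2 * p := by
  have hpos := hF.card_filter_adj_ne_zero hμ hx hy hxy
  have hle : #{z ∈ g.fixedFinset | G.Adj x z} ≤ 2 * p := by
    rw [← hreg x, ← card_neighborFinset_eq_degree, neighborFinset_eq_filter]
    exact card_le_card (filter_subset_filter _ (subset_univ _))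
  have hdvd : p ∣ #{z ∈ g.fixedFinset | G.Adj x z} := by
    have hmod := card_filter_adj_modEq_degree hg (mem_fixedFinset.1 hx)
    rw [hreg x] at hmod
    exact Nat.modEq_zero_iff_dvd.1 (hmod.trans (Nat.modEq_zero_iff_dvd.2 (dvd_mul_left p 2)))
  obtain ⟨c, hc⟩ := hdvd
  rw [hc] at hpos hle ⊢
  have hp := (Fact.out : p.Prime).pos
  have hc2 : c ≤ 2 := by nlinarith
  interval_cases c <;> simp_all [mul_comm]

end Iso

variable [Fintype V] [DecidableEq V] [DecidableRel G.Adj]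

theorem IsSRGWith.isPairRegularOn_fixedFinset {n k ℓ μ : ℕ} (h : G.IsSRGWith n k ℓ μ)
    {p : ℕ} [Fact p.Prime] {g : G ≃g G} (hg : g ^ p = 1) (hℓμ : ℓ + 1 = μ) (hμp : μ < p) :
    G.IsPairRegularOn g.fixedFinset μ := by
  intro u hu v hv huv
  rw [Iso.mem_fixedFinset] at hu hv
  by_cases hadj : G.Adj u v
  · rw [Iso.filter_adj_and_adj_eq_commonNeighbors hg hu hv (by rw [h.of_adj u v hadj]; omega)]
    simp [Set.toFinset_card, h.of_adj u v hadj, hadj, hℓμ]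
  · rw [Iso.filter_adj_and_adj_eq_commonNeighbors hg hu hv (by rw [h.of_not_adj huv hadj]; omega)]
    simp [Set.toFinset_card, h.of_not_adj huv hadj, hadj]

theorem IsSRGWith.card_fixedFinset_eq_one (h : G.IsSRGWith 99 14 1 2) {g : G ≃g G}
    (hg : orderOf g = 7) : #g.fixedFinset = 1 := by
  have : Fact (Nat.Prime 7) := ⟨by norm_num⟩
  have hg7 : g ^ 7 = 1 := hg ▸ pow_orderOf_eq_one g
  have hF_mod : #g.fixedFinset ≡ 1 [MOD 7] := (h.card ▸ Iso.card_fixedFinset_modEq hg7 :)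
  have hF_lt : #g.fixedFinset < 99 :=
    h.card ▸ Iso.card_fixedFinset_lt fun h1 => by simp [h1] at hg
  by_contra hne
  have hF : G.IsPairRegularOn g.fixedFinset 2 := h.isPairRegularOn_fixedFinset hg7 rfl (by norm_num)
  -- `7² ≡ 14² ≡ 49 (mod 147)`
  have hdeg : ∀ x ∈ g.fixedFinset, #{y ∈ g.fixedFinset | G.Adj x y} ^ 2 ≡ 49 [MOD 147] := by
    intro x hx
    obtain ⟨y, hy, hyx⟩ :=
      exists_mem_ne (s := g.fixedFinset) (by unfold Nat.ModEq at hF_mod; omega) x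
    rcases Iso.card_filter_adj_eq_or_eq h.regular hg7 hF two_ne_zero hx hy hyx.symm with h7 | h14
    · rw [h7]; rfl
    · rw [h14]; rfl
  have hsum : #g.fixedFinset * (2 * (#g.fixedFinset - 1)) ≡ 49 * #g.fixedFinset [MOD 147] := by
    rw [← hF.sum_card_filter_adj_sq, mul_comm, ← smul_eq_mul, ← sum_const]
    exact Nat.ModEq.sum hdeg
  exact Nat.not_modEq_147_of_lt_99 _ hF_lt hF_mod hsum

end SimpleGraph

/-- An automorphism of order `7` of a Conway 99-graph fixes exactly one vertex,
and every orbit of the cyclic group it generates, other than the singleton orbit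
of the fixed vertex, has exactly `7` elements. -/
theorem stmt_3 {V : Type*} [Fintype V] (G : SimpleGraph V) [DecidableRel G.Adj]
    (h : G.IsSRGWith 99 14 1 2)
    (g : G ≃g G) (hg : orderOf g = 7) :
    (∃! x : V, g x = x) ∧
      ∀ v : V, g v ≠ v → Set.ncard {w : V | ∃ n : ℤ, (g ^ n) v = w} = 7 := by
  classical
  have : Fact (Nat.Prime 7) := ⟨by norm_num⟩
  refine ⟨(Fintype.existsUnique_iff_card_one _).2 (h.card_fixedFinset_eq_one hg), fun v hv => ?_⟩
  have hσ := SimpleGraph.Iso.toPermHom_pow_eq_one (hg ▸ pow_orderOf_eq_one g)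
  simpa [← map_zpow] using Equiv.Perm.ncard_zpowers_orbit hσ hv
end

section
/- Let Γ be a Conway 99-graph and let g be an automorphism of Γ of order 14. Then g fixes exactly one vertex of Γ, and every orbit of the cyclic group ⟨g⟩ on the vertex set, other than the singleton orbit of the fixed vertex, has exactly 14 elements. -/
section ConwayHelpers


variable {V : Type*} {G : SimpleGraph V}

lemma iso_pow_succ (e : G ≃g G) (k : ℕ) (x : V) : (e ^ (k+1)) x = e ((e ^ k) x) := by
  rw [pow_succ']; rfl

lemma iso_fix_pow (e : G ≃g G) {a : V} (ha : e a = a) : ∀ k : ℕ, (e ^ k) a = a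
  | 0 => rfl
  | (k+1) => by rw [iso_pow_succ, iso_fix_pow e ha k, ha]

lemma iso_coe_pow (e : G ≃g G) : ∀ (n : ℕ), ⇑(e ^ n) = (⇑e)^[n]
  | 0 => rfl
  | (n+1) => by
      rw [pow_succ', Function.iterate_succ']
      funext x
      show e ((e ^ n) x) = _
      rw [iso_coe_pow e n]; rfl

lemma iso_pow_fix_gcd (e : G ≃g G) (x : V) {m n : ℕ} (hm : (e ^ m) x = x)
    (hn : (e ^ n) x = x) : (e ^ (m.gcd n)) x = x := by
  have h1 : Function.IsPeriodicPt (⇑e) m x := by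
    rw [Function.IsPeriodicPt, Function.IsFixedPt, ← iso_coe_pow]; exact hm
  have h2 : Function.IsPeriodicPt (⇑e) n x := by
    rw [Function.IsPeriodicPt, Function.IsFixedPt, ← iso_coe_pow]; exact hn
  have := h1.gcd h2
  rwa [Function.IsPeriodicPt, Function.IsFixedPt, ← iso_coe_pow] at this

lemma no7 (e : G ≃g G) (he : e ^ 7 = 1) {x : V} (h1 : e x ≠ x) {d : ℕ}
    (hd0 : 0 < d) (hd : d < 7) : (e ^ d) x ≠ x := by
  intro hfix
  have h7 : (e ^ 7) x = x := by rw [he]; rfl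
  have := iso_pow_fix_gcd e x hfix h7
  interval_cases d <;> simp_all

lemma no14 (e : G ≃g G) {x : V} (he14 : (e ^ 14) x = x) (h1 : e x ≠ x)
    (h2 : (e ^ 2) x ≠ x) (h7 : (e ^ 7) x ≠ x) {d : ℕ}
    (hd0 : 0 < d) (hd : d < 14) : (e ^ d) x ≠ x := by
  intro hfix
  have := iso_pow_fix_gcd e x hfix he14
  interval_cases d <;> simp_all

lemma iso_pow_mod7 (e : G ≃g G) (he : e ^ 7 = 1) (k : ℕ) (x : V) :
    (e ^ k) x = (e ^ (k % 7)) x := by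
  conv_lhs => rw [← Nat.div_add_mod k 7, pow_add, pow_mul, he, one_pow, one_mul]


lemma iso_pow_modN (e : G ≃g G) {N : ℕ} (he : e ^ N = 1) (hN : 0 < N) (k : ℕ) (x : V) :
    (e ^ k) x = (e ^ (k % N)) x := by
  conv_lhs => rw [← Nat.div_add_mod k N, pow_add, pow_mul, he, one_pow, one_mul]

lemma orbit_inj_gen (e : G ≃g G) {w : V} {N : ℕ}
    (hno : ∀ d, 0 < d → d < N → (e ^ d) w ≠ w) :
    ∀ i ∈ Finset.range N, ∀ j ∈ Finset.range N, (e ^ i) w = (e ^ j) w → i = j := by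
  intro i hi j hj hij
  rw [Finset.mem_range] at hi hj
  by_contra hne
  rcases Nat.lt_or_ge i j with hlt | hge
  · have : (e ^ (j - i)) w = w := by
      apply (e ^ i).injective
      show ((e ^ i) * (e ^ (j-i))) w = _
      rw [← pow_add, Nat.add_sub_cancel' hlt.le, hij]
    exact hno _ (Nat.sub_pos_of_lt hlt) (by omega) this
  · have hlt2 : j < i := lt_of_le_of_ne hge (Ne.symm hne)
    have : (e ^ (i - j)) w = w := by
      apply (e ^ j).injective
      show ((e ^ j) * (e ^ (i-j))) w = _
      rw [← pow_add, Nat.add_sub_cancel' hlt2.le, ← hij]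
    exact hno _ (Nat.sub_pos_of_lt hlt2) (by omega) this


lemma iso_adj (e : G ≃g G) {a w : V} (haw : G.Adj a w) : G.Adj (e a) (e w) :=
  e.map_adj_iff.mpr haw

lemma iso_pow_adj_fix (e : G ≃g G) {a w : V} (ha : e a = a) (haw : G.Adj a w) (k : ℕ) :
    G.Adj a ((e ^ k) w) := by
  have := iso_adj (e ^ k) haw
  rwa [iso_fix_pow e ha k] at this

lemma orbit_inj (e : G ≃g G) (he : e ^ 7 = 1) {w : V} (hw : e w ≠ w) :
    ∀ i ∈ Finset.range 7, ∀ j ∈ Finset.range 7, (e ^ i) w = (e ^ j) w → i = j := by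
  intro i hi j hj hij
  rw [Finset.mem_range] at hi hj
  by_contra hne
  rcases Nat.lt_or_ge i j with hlt | hge
  · have : (e ^ (j - i)) w = w := by
      apply (e ^ i).injective
      show ((e ^ i) * (e ^ (j-i))) w = _
      rw [← pow_add, Nat.add_sub_cancel' hlt.le, hij]
    exact no7 e he hw (Nat.sub_pos_of_lt hlt) (by omega) this
  · have hlt2 : j < i := lt_of_le_of_ne hge (Ne.symm hne)
    have : (e ^ (i - j)) w = w := by
      apply (e ^ j).injective
      show ((e ^ j) * (e ^ (i-j))) w = _
      rw [← pow_add, Nat.add_sub_cancel' hlt2.le, ← hij]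
    exact no7 e he hw (Nat.sub_pos_of_lt hlt2) (by omega) this

lemma orbit7_card [DecidableEq V] (e : G ≃g G) (he : e ^ 7 = 1) {w : V} (hw : e w ≠ w) :
    ((Finset.range 7).image fun k => (e ^ k) w).card = 7 := by
  rw [Finset.card_image_of_injOn, Finset.card_range]
  intro i hi j hj hij
  exact orbit_inj e he hw i hi j hj hij

lemma orbit_moved (e : G ≃g G) {w : V} (hw : e w ≠ w) (k : ℕ) :
    e ((e ^ k) w) ≠ (e ^ k) w := by
  intro hfix
  apply hw
  have h1 : (e ^ (k+1)) w = (e ^ k) w := by rwa [iso_pow_succ]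
  have h2 : (e ^ k) (e w) = (e ^ k) w := by
    show ((e ^ k) * e) w = _
    rw [← pow_succ, h1]
  exact (e ^ k).injective h2

lemma seven_dvd (e : G ≃g G) (he : e ^ 7 = 1) :
    ∀ s : Finset V, (∀ x ∈ s, e x ∈ s) → (∀ x ∈ s, e x ≠ x) → 7 ∣ s.card := by
  classical
  intro s
  induction s using Finset.strongInduction with
  | _ s ih =>
    intro hinv hmov
    rcases s.eq_empty_or_nonempty with rfl | ⟨x, hx⟩
    · simp
    · have hxm : e x ≠ x := hmov x hx
      set o : Finset V := (Finset.range 7).image (fun k => (e ^ k) x) with ho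
      have hpow_mem : ∀ k : ℕ, (e ^ k) x ∈ s := by
        intro k
        induction k with
        | zero => exact hx
        | succ n ihn => rw [iso_pow_succ]; exact hinv _ ihn
      have hos : o ⊆ s := by
        intro y hy
        simp only [ho, Finset.mem_image, Finset.mem_range] at hy
        obtain ⟨k, _, rfl⟩ := hy
        exact hpow_mem k
      have hcard : o.card = 7 := by
        rw [ho, Finset.card_image_of_injOn, Finset.card_range]
        intro i hi j hj hij'
        exact orbit_inj e he hxm i hi j hj hij'
      have hone : x ∈ o := by
        simp only [ho, Finset.mem_image, Finset.mem_range]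
        exact ⟨0, by norm_num, rfl⟩
      have hss : s \ o ⊂ s := Finset.sdiff_ssubset hos ⟨x, hone⟩
      have hinv' : ∀ y ∈ s \ o, e y ∈ s \ o := by
        intro y hy
        rw [Finset.mem_sdiff] at hy ⊢
        refine ⟨hinv y hy.1, fun hey => hy.2 ?_⟩
        simp only [ho, Finset.mem_image, Finset.mem_range] at hey ⊢
        obtain ⟨k, hk, hek⟩ := hey
        rcases Nat.eq_zero_or_pos k with rfl | hk0
        · have h7x : (e ^ 7) x = x := by rw [he]; rfl
          refine ⟨6, by norm_num, e.injective ?_⟩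
          rw [← iso_pow_succ, show (6+1 : ℕ) = 7 from rfl, h7x]
          exact hek
        · refine ⟨k - 1, by omega, e.injective ?_⟩
          rw [← iso_pow_succ, Nat.sub_add_cancel hk0]
          exact hek
      have hmov' : ∀ y ∈ s \ o, e y ≠ y := fun y hy => hmov y (Finset.mem_sdiff.mp hy).1
      have hdvd := ih (s \ o) hss hinv' hmov'
      have hcs : (s \ o).card = s.card - 7 := by rw [Finset.card_sdiff_of_subset hos, hcard]
      have h7le : 7 ≤ s.card := hcard ▸ Finset.card_le_card hos
      omega


section SRG
variable [Fintype V] [DecidableRel G.Adj]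

lemma common1 (h : G.IsSRGWith 99 14 1 2)
    {a b : V} (hab : G.Adj a b) :
    ∃ z, (G.Adj a z ∧ G.Adj b z) ∧ ∀ y, G.Adj a y → G.Adj b y → y = z := by
  have hc := h.of_adj a b hab
  rw [Fintype.card_eq_one_iff] at hc
  obtain ⟨⟨z, hz⟩, huniq⟩ := hc
  rw [SimpleGraph.mem_commonNeighbors] at hz
  refine ⟨z, hz, fun y hya hyb => ?_⟩
  have : (⟨y, by rw [SimpleGraph.mem_commonNeighbors]; exact ⟨hya, hyb⟩⟩ :
      ↑(G.commonNeighbors a b)) = ⟨z, _⟩ := huniq _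
  exact congrArg Subtype.val this

lemma common2 (h : G.IsSRGWith 99 14 1 2)
    {a b : V} (hne : a ≠ b) (hnadj : ¬ G.Adj a b) :
    ∃ z1 z2, z1 ≠ z2 ∧ (G.Adj a z1 ∧ G.Adj b z1) ∧ (G.Adj a z2 ∧ G.Adj b z2) ∧
      ∀ y, G.Adj a y → G.Adj b y → (y = z1 ∨ y = z2) := by
  classical
  have hc := h.of_not_adj hne hnadj
  rw [← Set.toFinset_card, Finset.card_eq_two] at hc
  obtain ⟨z1, z2, hz12, hset⟩ := hc
  have hmem : ∀ y, y ∈ G.commonNeighbors a b ↔ (y = z1 ∨ y = z2) := by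
    intro y
    rw [← Set.mem_toFinset, hset]
    simp
  have h1 := (hmem z1).mpr (Or.inl rfl)
  have h2 := (hmem z2).mpr (Or.inr rfl)
  rw [SimpleGraph.mem_commonNeighbors] at h1 h2
  exact ⟨z1, z2, hz12, h1, h2, fun y hya hyb =>
    (hmem y).mp (by rw [SimpleGraph.mem_commonNeighbors]; exact ⟨hya, hyb⟩)⟩

lemma nbrs_fixed (h : G.IsSRGWith 99 14 1 2) (t : G ≃g G) (ht7 : t ^ 7 = 1)
    {a b : V} (ha : t a = a) (hb : t b = b) (hab : a ≠ b) {w : V} (haw : G.Adj a w) :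
    t w = w := by
  classical
  -- step 1: a fixed neighbor w₀ of a
  obtain ⟨w₀, hw₀fix, hw₀adj⟩ : ∃ w₀, t w₀ = w₀ ∧ G.Adj a w₀ := by
    by_cases hadj : G.Adj a b
    · exact ⟨b, hb, hadj⟩
    · obtain ⟨z1, z2, hz12, ⟨haz1, hbz1⟩, ⟨haz2, hbz2⟩, huniq2⟩ := common2 h hab hadj
      have htz1 : G.Adj a (t z1) := by have := iso_adj t haz1; rwa [ha] at this
      have htz1' : G.Adj b (t z1) := by have := iso_adj t hbz1; rwa [hb] at this
      rcases huniq2 (t z1) htz1 htz1' with hfix | hswap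
      · exact ⟨z1, hfix, haz1⟩
      · -- t z1 = z2 ⇒ (t^2) z1 = z1 ⇒ z1 fixed, contradiction
        have htz2 : G.Adj a (t z2) := by have := iso_adj t haz2; rwa [ha] at this
        have htz2' : G.Adj b (t z2) := by have := iso_adj t hbz2; rwa [hb] at this
        have hz2back : t z2 = z1 := by
          rcases huniq2 (t z2) htz2 htz2' with h1 | h2
          · exact h1
          · exact absurd (t.injective (hswap.trans h2.symm)) hz12
        have h2fix : (t ^ 2) z1 = z1 := by
          show (t * t ^ 1) z1 = z1
          rw [pow_one]
          show t (t z1) = z1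
          rw [hswap, hz2back]
        have h7fix : (t ^ 7) z1 = z1 := by rw [ht7]; rfl
        have h1fix := iso_pow_fix_gcd t z1 h2fix h7fix
        norm_num at h1fix
        exact ⟨z1, h1fix, haz1⟩
  -- step 2: partner p₀ of (a, w₀), fixed
  obtain ⟨p₀, ⟨hap₀, hw₀p₀⟩, hp₀uniq⟩ := common1 h hw₀adj
  have hp₀fix : t p₀ = p₀ :=
    hp₀uniq (t p₀) (by have := iso_adj t hap₀; rwa [ha] at this)
      (by have := iso_adj t hw₀p₀; rwa [hw₀fix] at this)
  have hw₀p₀ne : w₀ ≠ p₀ := hw₀p₀.ne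
  -- step 3: contradiction if w moved
  by_contra hwmoved
  obtain ⟨w', ⟨haw', hww'⟩, hw'uniq⟩ := common1 h haw
  have hw'moved : t w' ≠ w' := by
    intro hfix
    apply hwmoved
    obtain ⟨q, ⟨haq, hw'q⟩, hquniq⟩ := common1 h haw'
    have h1 : w = q := hquniq w haw hww'.symm
    have h2 : t w = q := hquniq (t w)
      (by have := iso_adj t haw; rwa [ha] at this)
      (by have := (iso_adj t hww').symm; rwa [hfix] at this)
    rw [h2, h1]
  -- orbits
  set o1 : Finset V := (Finset.range 7).image (fun k => (t ^ k) w) with ho1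
  set o2 : Finset V := (Finset.range 7).image (fun k => (t ^ k) w') with ho2
  have hc1 : o1.card = 7 := orbit7_card t ht7 hwmoved
  have hc2 : o2.card = 7 := orbit7_card t ht7 hw'moved
  -- disjointness of o1 o2
  have hdisj : Disjoint o1 o2 := by
    rw [Finset.disjoint_left]
    rintro y hy1 hy2
    simp only [ho1, ho2, Finset.mem_image, Finset.mem_range] at hy1 hy2
    obtain ⟨i, hi, hiy⟩ := hy1
    obtain ⟨j, hj, hjy⟩ := hy2
    -- (t^i) w = (t^j) w' ⇒ w' = (t^m) w, m = (7 - j + i) % 7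
    have hkey : (t ^ ((7 - j + i) % 7)) w = w' := by
      rw [← iso_pow_mod7 t ht7]
      have : (t ^ (7 - j)) ((t ^ j) w') = (t ^ (7 - j)) ((t ^ i) w) := by
        rw [hiy, hjy]
      rw [show (t ^ (7-j)) ((t ^ j) w') = ((t ^ (7-j)) * (t ^ j)) w' from rfl,
        ← pow_add, Nat.sub_add_cancel hj.le, ht7,
        show (t ^ (7-j)) ((t ^ i) w) = ((t ^ (7-j)) * (t ^ i)) w from rfl,
        ← pow_add] at this
      exact this.symm
    set m := (7 - j + i) % 7 with hm
    have hmlt : m < 7 := Nat.mod_lt _ (by norm_num)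
    have hm0 : m ≠ 0 := by
      intro h0
      rw [h0] at hkey
      exact hww'.ne (by exact hkey)
    -- w = (t^(2m)) w
    have hw2m : (t ^ (2 * m)) w = w := by
      obtain ⟨q, ⟨haq, hw'q⟩, hquniq⟩ := common1 h haw'
      have hqw : w = q := hquniq w haw hww'.symm
      have hadj2 : G.Adj a ((t ^ m) w') := iso_pow_adj_fix t ha haw' m
      have hadj3 : G.Adj w' ((t ^ m) w') := by
        have := iso_adj (t ^ m) hww'
        rwa [hkey] at this
      have hqm : (t ^ m) w' = q := hquniq _ hadj2 hadj3
      have hfin : (t ^ m) ((t ^ m) w) = w := by rw [hkey, hqm, ← hqw]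
      rw [two_mul, pow_add]
      exact hfin
    have h2m7 : (t ^ (2 * m % 7)) w = w := by rw [← iso_pow_mod7 t ht7]; exact hw2m
    have : 2 * m % 7 ≠ 0 := by omega
    exact no7 t ht7 hwmoved (Nat.pos_of_ne_zero this) (Nat.mod_lt _ (by norm_num)) h2m7
  -- fixed vertices not in orbits
  have hfix_notMem : ∀ y : V, t y = y → y ∉ o1 ∪ o2 := by
    intro y hy hmem
    rw [Finset.mem_union] at hmem
    rcases hmem with hm1 | hm1 <;>
    · simp only [ho1, ho2, Finset.mem_image, Finset.mem_range] at hm1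
      obtain ⟨k, hk, rfl⟩ := hm1
      first
        | exact orbit_moved t hwmoved k hy
        | exact orbit_moved t hw'moved k hy
  -- everything inside N(a)
  have hsub : o1 ∪ o2 ∪ {w₀, p₀} ⊆ G.neighborFinset a := by
    intro y hy
    rw [SimpleGraph.mem_neighborFinset]
    simp only [Finset.mem_union, Finset.mem_insert, Finset.mem_singleton] at hy
    rcases hy with (hy1 | hy2) | hy3 | hy4
    · simp only [ho1, Finset.mem_image, Finset.mem_range] at hy1
      obtain ⟨k, hk, rfl⟩ := hy1
      exact iso_pow_adj_fix t ha haw k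
    · simp only [ho2, Finset.mem_image, Finset.mem_range] at hy2
      obtain ⟨k, hk, rfl⟩ := hy2
      exact iso_pow_adj_fix t ha haw' k
    · subst hy3; exact hw₀adj
    · subst hy4; exact hap₀
  have hdisj2 : Disjoint (o1 ∪ o2) ({w₀, p₀} : Finset V) := by
    rw [Finset.disjoint_right]
    intro y hy
    simp only [Finset.mem_insert, Finset.mem_singleton] at hy
    rcases hy with rfl | rfl
    · exact hfix_notMem _ hw₀fix
    · exact hfix_notMem _ hp₀fix
  have hcard : (o1 ∪ o2 ∪ {w₀, p₀}).card = 16 := by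
    rw [Finset.card_union_of_disjoint hdisj2, Finset.card_union_of_disjoint hdisj,
      hc1, hc2, Finset.card_pair hw₀p₀ne]
  have hle := Finset.card_le_card hsub
  rw [hcard] at hle
  have hdeg : (G.neighborFinset a).card = 14 := h.regular a
  omega


lemma tau_all (h : G.IsSRGWith 99 14 1 2) (t : G ≃g G) (ht7 : t ^ 7 = 1)
    {u v : V} (hu : t u = u) (hv : t v = v) (huv : u ≠ v) : ∀ x, t x = x := by
  intro x
  by_cases hxu : x = u
  · subst hxu; exact hu
  by_cases hadj : G.Adj u x
  · exact nbrs_fixed h t ht7 hu hv huv hadj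
  · obtain ⟨z1, z2, hz12, ⟨huz1, hxz1⟩, _, _⟩ :=
      common2 h (fun hh => hxu hh.symm) hadj
    have hz1fix : t z1 = z1 := nbrs_fixed h t ht7 hu hv huv huz1
    exact nbrs_fixed h t ht7 hz1fix hu huz1.ne' hxz1.symm

lemma tau_unique (h : G.IsSRGWith 99 14 1 2) (t : G ≃g G) (ht7 : t ^ 7 = 1)
    (htne : t ≠ 1) {u v : V} (hu : t u = u) (hv : t v = v) : u = v := by
  by_contra huv
  apply htne
  ext x
  exact tau_all h t ht7 hu hv huv x

end SRG

end ConwayHelpers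

/-- An automorphism of order `14` of a Conway 99-graph fixes exactly one vertex,
and every orbit of the cyclic group it generates, other than the singleton orbit
of the fixed vertex, has exactly `14` elements. -/
theorem stmt_5 {V : Type*} [Fintype V] (G : SimpleGraph V) [DecidableRel G.Adj]
    (h : G.IsSRGWith 99 14 1 2)
    (g : G ≃g G) (hg : orderOf g = 14) :
    (∃! x : V, g x = x) ∧
      ∀ v : V, g v ≠ v → Set.ncard {w : V | ∃ n : ℤ, (g ^ n) v = w} = 14 := by
  classical
  have hg14 : g ^ 14 = 1 := by rw [← hg]; exact pow_orderOf_eq_one g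
  have htau7 : (g ^ 2) ^ 7 = 1 := by rw [← pow_mul]; exact hg14
  have htau_ne : (g ^ 2) ≠ 1 := by
    intro h1
    have := orderOf_dvd_of_pow_eq_one h1
    rw [hg] at this
    norm_num at this
  have hsig_ne : (g ^ 7) ≠ 1 := by
    intro h1
    have := orderOf_dvd_of_pow_eq_one h1
    rw [hg] at this
    norm_num at this
  -- existence of a fixed point of τ = g²
  have hex : ∃ v₀ : V, (g ^ 2) v₀ = v₀ := by
    by_contra hno
    push_neg at hno
    have hdvd := seven_dvd (g ^ 2) htau7 Finset.univ (fun x _ => Finset.mem_univ _)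
      (fun x _ => hno x)
    rw [Finset.card_univ, h.card] at hdvd
    norm_num at hdvd
  obtain ⟨v₀, hv₀⟩ := hex
  have huniq_tau : ∀ x, (g ^ 2) x = x → x = v₀ := fun x hx =>
    tau_unique h (g ^ 2) htau7 htau_ne hx hv₀
  -- g fixes v₀
  have hgv₀ : g v₀ = v₀ := by
    apply huniq_tau
    calc (g ^ 2) (g v₀) = ((g ^ 2) * g) v₀ := rfl
      _ = (g * g ^ 2) v₀ := by rw [← pow_succ, ← pow_succ']
      _ = g ((g ^ 2) v₀) := rfl
      _ = g v₀ := by rw [hv₀]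
  -- uniqueness of g-fixed points
  have huniq_g : ∀ x, g x = x → x = v₀ := by
    intro x hx
    apply huniq_tau
    rw [pow_two]
    show g (g x) = x
    rw [hx, hx]
  -- basic facts about neighbors of v₀
  have hmovedN : ∀ w, G.Adj v₀ w → g w ≠ w ∧ (g ^ 2) w ≠ w := by
    intro w hadj
    constructor
    · intro hh
      exact G.irrefl (huniq_g w hh ▸ hadj)
    · intro hh
      exact G.irrefl (huniq_tau w hh ▸ hadj)
  have h14fix : ∀ x : V, (g ^ 14) x = x := by intro x; rw [hg14]; rfl
  -- orbit of a neighbor not fixed by g^7 covers all of N(v₀)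
  have horb : ∀ w, G.Adj v₀ w → (g ^ 7) w ≠ w →
      ((Finset.range 14).image fun k => (g ^ k) w) = G.neighborFinset v₀ := by
    intro w hadj hm7
    obtain ⟨hm1, hm2⟩ := hmovedN w hadj
    apply Finset.eq_of_subset_of_card_le
    · intro y hy
      simp only [Finset.mem_image, Finset.mem_range] at hy
      obtain ⟨k, _, rfl⟩ := hy
      rw [SimpleGraph.mem_neighborFinset]
      exact iso_pow_adj_fix g hgv₀ hadj k
    · have hdeg : (G.neighborFinset v₀).card = 14 := h.regular v₀
      rw [hdeg, Finset.card_image_of_injOn, Finset.card_range]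
      intro i hi j hj hij
      exact orbit_inj_gen g (fun d hd0 hd14 => no14 g (h14fix w) hm1 hm2 hm7 hd0 hd14)
        i hi j hj hij
  -- if (g^7) w ≠ w for w ∈ N(v₀), then w is adjacent to (g^7) w
  have hE : ∀ w, G.Adj v₀ w → (g ^ 7) w ≠ w → G.Adj w ((g ^ 7) w) := by
    intro w hadj hm7
    obtain ⟨hm1, hm2⟩ := hmovedN w hadj
    have hinj : ∀ i ∈ Finset.range 14, ∀ j ∈ Finset.range 14,
        (g ^ i) w = (g ^ j) w → i = j :=
      orbit_inj_gen g (fun d hd0 hd14 => no14 g (h14fix w) hm1 hm2 hm7 hd0 hd14)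
    obtain ⟨p, ⟨hvp, hwp⟩, hpuniq⟩ := common1 h hadj
    have hpmem : p ∈ (Finset.range 14).image fun k => (g ^ k) w := by
      rw [horb w hadj hm7, SimpleGraph.mem_neighborFinset]
      exact hvp
    simp only [Finset.mem_image, Finset.mem_range] at hpmem
    obtain ⟨m, hmlt, hmp⟩ := hpmem
    have hm0 : m ≠ 0 := by
      intro h0
      subst h0
      exact hwp.ne hmp
    -- involution: (g^m) p = w, hence (g^(2m)) w = w
    obtain ⟨q, ⟨hvq, hpq⟩, hquniq⟩ := common1 h hvp
    have hq1 : w = q := hquniq w hadj hwp.symm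
    have hq2 : (g ^ m) p = q := by
      apply hquniq
      · exact iso_pow_adj_fix g hgv₀ hvp m
      · have := iso_adj (g ^ m) hwp
        rwa [hmp] at this
    have h2m : (g ^ (2 * m)) w = w := by
      rw [two_mul, pow_add]
      show (g ^ m) ((g ^ m) w) = w
      rw [hmp, hq2, ← hq1]
    have h2mmod : (g ^ (2 * m % 14)) w = w := by
      rw [← iso_pow_modN g hg14 (by norm_num)]
      exact h2m
    have hmod0 : 2 * m % 14 = 0 := by
      by_contra hne
      exact no14 g (h14fix w) hm1 hm2 hm7 (Nat.pos_of_ne_zero hne)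
        (Nat.mod_lt _ (by norm_num)) h2mmod
    have hm7' : m = 7 := by omega
    rw [← hm7', hmp]
    exact hwp
  -- no neighbor of v₀ is fixed by g^7
  have hNmoved : ∀ w, G.Adj v₀ w → (g ^ 7) w ≠ w := by
    by_contra hc
    push_neg at hc
    obtain ⟨w₀, hw₀adj, hw₀fix⟩ := hc
    -- all neighbors of v₀ are fixed by g^7
    have hallN : ∀ w, G.Adj v₀ w → (g ^ 7) w = w := by
      intro w hw
      by_contra hm7
      have hmem : w₀ ∈ (Finset.range 14).image fun k => (g ^ k) w := by
        rw [horb w hw hm7, SimpleGraph.mem_neighborFinset]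
        exact hw₀adj
      simp only [Finset.mem_image, Finset.mem_range] at hmem
      obtain ⟨k, hk, hkw⟩ := hmem
      apply hm7
      apply (g ^ k).injective
      have hcomm : (g ^ k) ((g ^ 7) w) = (g ^ 7) ((g ^ k) w) := by
        show ((g ^ k) * (g ^ 7)) w = ((g ^ 7) * (g ^ k)) w
        rw [← pow_add, ← pow_add, Nat.add_comm]
      rw [hcomm, hkw, hw₀fix]
    -- then g^7 = 1, contradiction
    apply hsig_ne
    ext x
    show (g ^ 7) x = x
    by_cases hx0 : x = v₀
    · subst hx0; exact iso_fix_pow g hgv₀ 7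
    by_cases hadj : G.Adj v₀ x
    · exact hallN x hadj
    · obtain ⟨s1, s2, hs12, ⟨h1a, h1b⟩, ⟨h2a, h2b⟩, hsuniq⟩ :=
        common2 h (fun hh => hx0 hh.symm) hadj
      have hfix1 : (g ^ 7) s1 = s1 := hallN s1 h1a
      have hfix2 : (g ^ 7) s2 = s2 := hallN s2 h2a
      -- s1 and s2 are not adjacent
      have hs12ne : ¬ G.Adj s1 s2 := by
        intro hadj12
        obtain ⟨q, _, hquniq⟩ := common1 h hadj12
        exact hx0 ((hquniq x h1b.symm h2b.symm).trans (hquniq v₀ h1a.symm h2a.symm).symm)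
      obtain ⟨t1, t2, ht12, ⟨ht1a, ht1b⟩, ⟨ht2a, ht2b⟩, htuniq⟩ :=
        common2 h hs12 hs12ne
      have hmem_v : v₀ = t1 ∨ v₀ = t2 := htuniq v₀ h1a.symm h2a.symm
      have hmem_x : x = t1 ∨ x = t2 := htuniq x h1b.symm h2b.symm
      have hmem_s : (g ^ 7) x = t1 ∨ (g ^ 7) x = t2 := by
        apply htuniq
        · have := iso_adj (g ^ 7) h1b
          rw [hfix1] at this
          exact this.symm
        · have := iso_adj (g ^ 7) h2b
          rw [hfix2] at this
          exact this.symm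
      have hsx_ne_v : (g ^ 7) x ≠ v₀ := by
        intro hh
        apply hx0
        apply (g ^ 7).injective
        rw [hh, iso_fix_pow g hgv₀ 7]
      rcases hmem_v with h1 | h1 <;> rcases hmem_x with h2 | h2 <;>
          rcases hmem_s with h3 | h3 <;>
        first
          | exact absurd (h2.trans h1.symm) hx0
          | exact absurd (h3.trans h1.symm) hsx_ne_v
          | exact h3.trans h2.symm
  -- g has no orbit of size 7 on moved points
  have hno7orbit : ∀ x, g x ≠ x → (g ^ 7) x ≠ x := by
    intro x hgx h7x
    have hx0 : x ≠ v₀ := fun hh => hgx (hh ▸ hgv₀)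
    have hadj : ¬ G.Adj v₀ x := fun hadj => hNmoved x hadj h7x
    obtain ⟨z1, z2, hz12, ⟨h1a, h1b⟩, ⟨h2a, h2b⟩, hsuniq⟩ :=
      common2 h (fun hh => hx0 hh.symm) hadj
    have hz1moved : (g ^ 7) z1 ≠ z1 := hNmoved z1 h1a
    have hmem : (g ^ 7) z1 = z1 ∨ (g ^ 7) z1 = z2 := by
      apply hsuniq
      · have := iso_adj (g ^ 7) h1a
        rwa [iso_fix_pow g hgv₀ 7] at this
      · have := iso_adj (g ^ 7) h1b
        rwa [h7x] at this
    have hz1z2 : (g ^ 7) z1 = z2 := hmem.resolve_left hz1moved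
    have hadj12 : G.Adj z1 z2 := hz1z2 ▸ hE z1 h1a hz1moved
    obtain ⟨q, _, hquniq⟩ := common1 h hadj12
    exact hx0 ((hquniq x h1b.symm h2b.symm).trans (hquniq v₀ h1a.symm h2a.symm).symm)
  -- assemble
  refine ⟨⟨v₀, hgv₀, fun y hy => huniq_g y hy⟩, ?_⟩
  intro v hv
  have h2v : (g ^ 2) v ≠ v := by
    intro hh
    apply hv
    rw [huniq_tau v hh]
    exact hgv₀
  have h7v : (g ^ 7) v ≠ v := hno7orbit v hv
  set S : Finset V := (Finset.range 14).image fun k => (g ^ k) v with hS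
  have hScard : S.card = 14 := by
    rw [hS, Finset.card_image_of_injOn, Finset.card_range]
    intro i hi j hj hij
    exact orbit_inj_gen g (fun d hd0 hd14 => no14 g (h14fix v) hv h2v h7v hd0 hd14)
      i hi j hj hij
  have hset : {w : V | ∃ n : ℤ, (g ^ n) v = w} = ↑S := by
    ext w
    simp only [Set.mem_setOf_eq, hS, Finset.coe_image, Set.mem_image, Finset.mem_coe,
      Finset.coe_range, Set.mem_Iio]
    constructor
    · rintro ⟨n, rfl⟩
      refine ⟨(n % 14).toNat, ?_, ?_⟩
      · have h1 : n % 14 < 14 := Int.emod_lt_of_pos n (by norm_num)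
        omega
      · have h2 := zpow_mod_orderOf g n
        rw [hg] at h2
        norm_num at h2
        rw [← h2, ← zpow_natCast, Int.toNat_of_nonneg (Int.emod_nonneg n (by norm_num))]
    · rintro ⟨k, hk, rfl⟩
      exact ⟨(k : ℤ), by rw [zpow_natCast]⟩
  rw [hset, Set.ncard_coe_finset, hScard]
end

section
/- Let b, a₂, a₃, a₄, a₅, a₆ be natural numbers with a₂ ≥ a₃ ≥ a₄ ≥ a₅ ≥ a₆. Then the two equations b + a₂ + a₃ + a₄ + a₅ + a₆ = 12 and b² + b + a₂² + a₃² + a₄² + a₅² + a₆² = 36 hold simultaneously if and only if (b, (a₂,a₃,a₄,a₅,a₆)) is one of the following five tuples: (0, (4,3,3,1,1)), (0, (3,3,3,3,0)), (2, (4,3,2,1,0)), (4, (3,2,1,1,1)), (4, (2,2,2,2,0)). In particular there are no solutions with b ∈ {1, 3, 5}. -/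
set_option maxHeartbeats 4000000 in
/-- Arithmetic classification of the valencies of an orbit in the orbit partition
induced by an order-14 automorphism of a Conway 99-graph: for natural numbers
`b ≥ 0` and `a₂ ≥ a₃ ≥ a₄ ≥ a₅ ≥ a₆`, the equations `b + a₂ + a₃ + a₄ + a₅ + a₆ = 12`
and `b² + b + a₂² + a₃² + a₄² + a₅² + a₆² = 36` hold simultaneously iff the tuple
is one of five listed possibilities; in particular there is no solution with
`b ∈ {1, 3, 5}`. -/
theorem stmt_6 (b a2 a3 a4 a5 a6 : ℕ)
    (h23 : a2 ≥ a3) (h34 : a3 ≥ a4) (h45 : a4 ≥ a5) (h56 : a5 ≥ a6) :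
    ((b + a2 + a3 + a4 + a5 + a6 = 12 ∧
        b ^ 2 + b + a2 ^ 2 + a3 ^ 2 + a4 ^ 2 + a5 ^ 2 + a6 ^ 2 = 36) ↔
      ((b, a2, a3, a4, a5, a6) = (0, 4, 3, 3, 1, 1) ∨
        (b, a2, a3, a4, a5, a6) = (0, 3, 3, 3, 3, 0) ∨
        (b, a2, a3, a4, a5, a6) = (2, 4, 3, 2, 1, 0) ∨
        (b, a2, a3, a4, a5, a6) = (4, 3, 2, 1, 1, 1) ∨
        (b, a2, a3, a4, a5, a6) = (4, 2, 2, 2, 2, 0))) ∧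
      (b = 1 ∨ b = 3 ∨ b = 5 →
        ¬(b + a2 + a3 + a4 + a5 + a6 = 12 ∧
          b ^ 2 + b + a2 ^ 2 + a3 ^ 2 + a4 ^ 2 + a5 ^ 2 + a6 ^ 2 = 36)) := by
  have main : (b + a2 + a3 + a4 + a5 + a6 = 12 ∧
      b ^ 2 + b + a2 ^ 2 + a3 ^ 2 + a4 ^ 2 + a5 ^ 2 + a6 ^ 2 = 36) →
      ((b, a2, a3, a4, a5, a6) = (0, 4, 3, 3, 1, 1) ∨
        (b, a2, a3, a4, a5, a6) = (0, 3, 3, 3, 3, 0) ∨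
        (b, a2, a3, a4, a5, a6) = (2, 4, 3, 2, 1, 0) ∨
        (b, a2, a3, a4, a5, a6) = (4, 3, 2, 1, 1, 1) ∨
        (b, a2, a3, a4, a5, a6) = (4, 2, 2, 2, 2, 0)) := by
    rintro ⟨h1, h2⟩
    have hb : b ≤ 5 := by nlinarith
    have ha2 : a2 ≤ 6 := by nlinarith
    simp only [Prod.mk.injEq]
    interval_cases b <;> interval_cases a2 <;> interval_cases a3 <;>
      interval_cases a4 <;> interval_cases a5 <;> interval_cases a6 <;> omega
  refine ⟨⟨main, ?_⟩, ?_⟩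
  · rintro (h|h|h|h|h) <;> (simp only [Prod.mk.injEq] at h; obtain ⟨rfl,rfl,rfl,rfl,rfl,rfl⟩ := h; constructor <;> norm_num)
  · rintro hb h
    rcases main h with h'|h'|h'|h'|h' <;> simp only [Prod.mk.injEq] at h' <;> omega
end

section
/- Let Γ be a Conway 99-graph, let g be an automorphism of Γ of order 14 with unique fixed vertex x, and let O be an orbit of the cyclic group ⟨g⟩ contained in Γ₂(x) with |O| = 14, such that every vertex of O has exactly 4 neighbors inside O. Then the induced subgraph of Γ on O contains no triangle (no three mutually adjacent vertices of O). -/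
/-!
Count the ordered triangles `(a, b, c)` of `Γ` with all three vertices in `O`. Since adjacent
vertices have exactly one common neighbour, the triangles with first vertex `a` are determined by
their second vertex, so there are at most 4 of them, and swapping `b` and `c` shows that their
number is even. The automorphisms `gᵏ` act transitively on `O` and preserve it, so this number is
the same `c` for every `a ∈ O`, and the total is `14 c`. Rotating triangles shows that the total is
divisible by 3, so `3 ∣ c`; with `c` even and `c ≤ 4` this forces `c = 0`.
-/

open Finset

theorem Finset.prime_dvd_card_of_perm_pow_eq_one {α : Type*} {p : ℕ} [Fact p.Prime]
    {σ : Equiv.Perm α} (hσ : σ ^ p = 1) {s : Finset α} (hs : ∀ a, σ a ∈ s ↔ a ∈ s)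
    (hfree : ∀ a ∈ s, σ a ≠ a) : p ∣ #s := by
  classical
  have hτ : σ.subtypePerm hs ^ p ^ 1 = 1 := by
    ext ⟨a, _⟩
    simp [Equiv.Perm.subtypePerm_pow, hσ]
  have hsupp : (σ.subtypePerm hs).supportᶜ = ∅ := by
    ext ⟨a, ha⟩
    simpa using hfree a ha
  have := Equiv.Perm.card_compl_support_modEq hτ
  rw [hsupp, card_empty, Fintype.card_coe] at this
  exact Nat.modEq_zero_iff_dvd.mp this.symm

namespace SimpleGraph

variable {V : Type*} (G : SimpleGraph V) [DecidableRel G.Adj]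

def orderedTriangles (s : Finset V) : Finset (V × V × V) :=
  (s ×ˢ s ×ˢ s).filter fun t => G.Adj t.1 t.2.1 ∧ G.Adj t.1 t.2.2 ∧ G.Adj t.2.1 t.2.2

variable {G}

theorem mem_orderedTriangles {s : Finset V} {t : V × V × V} :
    t ∈ G.orderedTriangles s ↔ (t.1 ∈ s ∧ t.2.1 ∈ s ∧ t.2.2 ∈ s) ∧
      G.Adj t.1 t.2.1 ∧ G.Adj t.1 t.2.2 ∧ G.Adj t.2.1 t.2.2 := by
  simp [orderedTriangles, and_assoc]

theorem three_dvd_card_orderedTriangles (s : Finset V) : 3 ∣ #(G.orderedTriangles s) := by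
  let rot : Equiv.Perm (V × V × V) :=
    ⟨fun t => (t.2.1, t.2.2, t.1), fun t => (t.2.2, t.1, t.2.1), fun _ => rfl, fun _ => rfl⟩
  refine prime_dvd_card_of_perm_pow_eq_one (σ := rot) (Equiv.ext fun _ => rfl) ?_ ?_
  · rintro ⟨a, b, c⟩
    simp only [mem_orderedTriangles, rot, Equiv.coe_fn_mk]
    constructor
    · rintro ⟨⟨hb, hc, ha⟩, hbc, hba, hca⟩
      exact ⟨⟨ha, hb, hc⟩, hba.symm, hca.symm, hbc⟩
    · rintro ⟨⟨ha, hb, hc⟩, hab, hac, hbc⟩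
      exact ⟨⟨hb, hc, ha⟩, hbc, hab.symm, hac.symm⟩
  · rintro ⟨a, b, c⟩ ht h
    simp only [rot, Equiv.coe_fn_mk, Prod.mk.injEq] at h
    exact (mem_orderedTriangles.mp ht).2.1.ne h.1.symm

theorem IsSRGWith.commonNeighbors_subsingleton [Fintype V] {n k μ : ℕ}
    (h : G.IsSRGWith n k 1 μ) {u v : V} (huv : G.Adj u v) :
    (G.commonNeighbors u v).Subsingleton :=
  Set.subsingleton_coe _ |>.mp <| Fintype.card_le_one_iff_subsingleton.mp (h.of_adj u v huv).le

variable [DecidableEq V]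

variable (G) in
def orderedTrianglesAt (s : Finset V) (a : V) : Finset (V × V × V) :=
  (G.orderedTriangles s).filter (·.1 = a)

theorem card_orderedTriangles_eq_sum (s : Finset V) :
    #(G.orderedTriangles s) = ∑ a ∈ s, #(G.orderedTrianglesAt s a) :=
  card_eq_sum_card_fiberwise fun _ ht => (mem_orderedTriangles.mp ht).1.1

theorem two_dvd_card_orderedTrianglesAt (s : Finset V) (a : V) :
    2 ∣ #(G.orderedTrianglesAt s a) := by
  let swap : Equiv.Perm (V × V × V) := (Equiv.refl V).prodCongr (Equiv.prodComm V V)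
  refine prime_dvd_card_of_perm_pow_eq_one (σ := swap) (Equiv.ext fun _ => rfl) ?_ ?_
  · rintro ⟨a', b, c⟩
    simp only [orderedTrianglesAt, mem_filter, mem_orderedTriangles, swap,
      Equiv.prodCongr_apply, Equiv.coe_refl, Equiv.coe_prodComm, Prod.map, id, Prod.swap]
    constructor
    · rintro ⟨⟨⟨ha, hc, hb⟩, hac, hab, hcb⟩, rfl⟩
      exact ⟨⟨⟨ha, hb, hc⟩, hab, hac, hcb.symm⟩, rfl⟩
    · rintro ⟨⟨⟨ha, hb, hc⟩, hab, hac, hbc⟩, rfl⟩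
      exact ⟨⟨⟨ha, hc, hb⟩, hac, hab, hbc.symm⟩, rfl⟩
  · rintro ⟨a', b, c⟩ ht h
    simp only [swap, Equiv.prodCongr_apply, Equiv.coe_refl, Equiv.coe_prodComm, Prod.map, id,
      Prod.swap, Prod.mk.injEq] at h
    exact (mem_orderedTriangles.mp (mem_filter.mp ht).1).2.2.2.ne h.2.1.symm

theorem card_orderedTrianglesAt_le
    (hG : ∀ u v, G.Adj u v → (G.commonNeighbors u v).Subsingleton) (s : Finset V) (a : V) :
    #(G.orderedTrianglesAt s a) ≤ #{w ∈ s | G.Adj a w} := by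
  refine card_le_card_of_injOn (·.2.1) (fun t ht => ?_) fun t ht t' ht' h => ?_
  · obtain ⟨htri, rfl⟩ := mem_filter.mp ht
    obtain ⟨⟨-, hb, -⟩, hab, -, -⟩ := mem_orderedTriangles.mp htri
    exact mem_filter.mpr ⟨hb, hab⟩
  · obtain ⟨a₁, b, c⟩ := t
    obtain ⟨a₂, b', c'⟩ := t'
    obtain ⟨htri, rfl : a₁ = a⟩ := mem_filter.mp ht
    obtain ⟨htri', rfl : a₂ = a₁⟩ := mem_filter.mp ht'
    obtain rfl : b = b' := h
    obtain ⟨-, hab, hac, hbc⟩ := mem_orderedTriangles.mp htri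
    obtain ⟨-, -, hac', hbc'⟩ := mem_orderedTriangles.mp htri'
    obtain rfl : c = c' := hG _ _ hab ⟨hac, hbc⟩ ⟨hac', hbc'⟩
    rfl

theorem card_orderedTrianglesAt_apply_iso (φ : G ≃g G) {s : Finset V}
    (hs : ∀ v, φ v ∈ s ↔ v ∈ s) (a : V) :
    #(G.orderedTrianglesAt s (φ a)) = #(G.orderedTrianglesAt s a) := by
  have hmem : ∀ (ψ : G ≃g G), (∀ v, ψ v ∈ s ↔ v ∈ s) → ∀ (b : V) (t : V × V × V),
      (ψ t.1, ψ t.2.1, ψ t.2.2) ∈ G.orderedTrianglesAt s (ψ b) ↔ t ∈ G.orderedTrianglesAt s b := by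
    intro ψ hψ b t
    simp only [orderedTrianglesAt, mem_filter, mem_orderedTriangles, hψ, ψ.map_adj_iff,
      ψ.injective.eq_iff]
  have hs' : ∀ v, φ.symm v ∈ s ↔ v ∈ s := fun v => by rw [← hs, φ.apply_symm_apply]
  refine card_nbij' (fun t => (φ.symm t.1, φ.symm t.2.1, φ.symm t.2.2))
    (fun t => (φ t.1, φ t.2.1, φ t.2.2)) (fun t ht => ?_) (fun t ht => (hmem φ hs a t).mpr ht)
    (fun t _ => by simp) (fun t _ => by simp)
  simpa using (hmem φ.symm hs' (φ a) t).mpr ht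

end SimpleGraph

namespace RelIso

variable {α : Type*} {r : α → α → Prop} (g : r ≃r r) (v : α)

theorem zpow_apply_mem_orbit_iff (k : ℤ) {w : α} :
    (g ^ k) w ∈ {w | ∃ n : ℤ, (g ^ n) v = w} ↔ w ∈ {w | ∃ n : ℤ, (g ^ n) v = w} := by
  have hmul : ∀ m n : ℤ, (g ^ m) ((g ^ n) v) = (g ^ (m + n)) v := fun m n => by
    rw [zpow_add, mul_apply]
  constructor
  · rintro ⟨n, hn⟩
    refine ⟨-k + n, ?_⟩
    rw [← hmul, hn, ← mul_apply, ← zpow_add, neg_add_cancel, zpow_zero, one_apply]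
  · rintro ⟨n, rfl⟩
    exact ⟨k + n, (hmul k n).symm⟩

theorem exists_zpow_apply_eq_of_mem_orbit {a b : α} (ha : a ∈ {w | ∃ n : ℤ, (g ^ n) v = w})
    (hb : b ∈ {w | ∃ n : ℤ, (g ^ n) v = w}) : ∃ k : ℤ, (g ^ k) a = b := by
  obtain ⟨m, rfl⟩ := ha
  obtain ⟨n, rfl⟩ := hb
  exact ⟨n - m, by rw [← mul_apply, ← zpow_add, sub_add_cancel]⟩

end RelIso

theorem stmt_8_general {V : Type*} [Fintype V] (G : SimpleGraph V) [DecidableRel G.Adj]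
    (h : G.IsSRGWith 99 14 1 2)
    (g : G ≃g G)
    (O : Set V) (hO : ∃ v : V, O = {w : V | ∃ n : ℤ, (g ^ n) v = w})
    (hOcard : O.ncard = 14)
    (h4 : ∀ v ∈ O, Set.ncard {w ∈ O | G.Adj v w} = 4) :
    ¬∃ a b c : V, a ∈ O ∧ b ∈ O ∧ c ∈ O ∧ G.Adj a b ∧ G.Adj a c ∧ G.Adj b c := by
  classical
  rintro ⟨a, b, c, ha, hb, hc, hab, hac, hbc⟩
  obtain ⟨v, hv⟩ := hO
  set s := O.toFinset
  have hconst : ∀ a' ∈ s, #(G.orderedTrianglesAt s a') = #(G.orderedTrianglesAt s a) := by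
    intro a' ha'
    rw [Set.mem_toFinset, hv] at ha'
    obtain ⟨k, rfl⟩ := g.exists_zpow_apply_eq_of_mem_orbit v (hv ▸ ha) ha'
    exact SimpleGraph.card_orderedTrianglesAt_apply_iso (g ^ k)
      (fun w => by simpa [s, hv] using g.zpow_apply_mem_orbit_iff v k) a
  have htotal : #(G.orderedTriangles s) = 14 * #(G.orderedTrianglesAt s a) := by
    rw [SimpleGraph.card_orderedTriangles_eq_sum, sum_congr rfl hconst, sum_const, smul_eq_mul,
      ← Set.ncard_eq_toFinset_card', hOcard]
  have hle : #(G.orderedTrianglesAt s a) ≤ 4 := by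
    refine (SimpleGraph.card_orderedTrianglesAt_le
      (fun _ _ => h.commonNeighbors_subsingleton) s a).trans ?_
    rw [← h4 a ha, ← Set.ncard_coe_finset]
    simp [s]
  have hpos : 0 < #(G.orderedTrianglesAt s a) :=
    card_pos.mpr ⟨(a, b, c), mem_filter.mpr
      ⟨SimpleGraph.mem_orderedTriangles.mpr ⟨by simp [s, ha, hb, hc], hab, hac, hbc⟩, rfl⟩⟩
  have h3 := htotal ▸ G.three_dvd_card_orderedTriangles s
  have h2 := G.two_dvd_card_orderedTrianglesAt s a
  omega

/-- Let `g` be an order-14 automorphism of a Conway 99-graph with unique fixed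
vertex `x`, and let `O` be an orbit of `⟨g⟩` contained in `Γ₂(x)` of size 14 in
which every vertex has exactly 4 neighbors inside `O`. Then the induced subgraph
on `O` contains no triangle. -/
theorem stmt_8 {V : Type*} [Fintype V] (G : SimpleGraph V) [DecidableRel G.Adj]
    (h : G.IsSRGWith 99 14 1 2)
    (g : G ≃g G) (hg : orderOf g = 14) (x : V) (hx : ∀ v : V, g v = v ↔ v = x)
    (O : Set V) (hO : ∃ v : V, O = {w : V | ∃ n : ℤ, (g ^ n) v = w})
    (hOsub : O ⊆ {v : V | v ≠ x ∧ ¬G.Adj x v}) (hOcard : O.ncard = 14)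
    (h4 : ∀ v ∈ O, Set.ncard {w ∈ O | G.Adj v w} = 4) :
    ¬∃ a b c : V, a ∈ O ∧ b ∈ O ∧ c ∈ O ∧ G.Adj a b ∧ G.Adj a c ∧ G.Adj b c :=
  stmt_8_general G h g O hO hOcard h4
end

section
/- Let Γ be a Conway 99-graph, let x be a vertex, and let v ∈ Γ₂(x). Then v has exactly two neighbors a, b in Γ₁(x); each vertex of Γ₁(x) has a unique neighbor inside Γ₁(x) (so the induced graph on Γ₁(x) is a perfect matching), and we let a′, b′ denote the matching-mates of a and b respectively. Then among the 12 neighbors of v lying in Γ₂(x): for each c ∈ {a, a′, b, b′}, exactly one such neighbor of v is adjacent to c, and for each c ∈ Γ₁(x) \ {a, a′, b, b′}, exactly two such neighbors of v are adjacent to c. -/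
/-!
In a strongly regular graph with `λ = 1` every edge lies in a unique triangle, so `Γ₁(x)` is a
perfect matching and two common neighbours of distinct vertices are never adjacent.
The neighbours of `v` in `Γ₂(x)` that are adjacent to `c ∈ Γ₁(x)` are the common neighbours of `v`
and `c` outside `Γ₁(x)`. There are `λ = 1` common neighbours if `c ∈ {a, b}`, none of them in
`Γ₁(x)`, and `μ = 2` otherwise, of which one (namely `a` or `b`) lies in `Γ₁(x)` exactly when `c`
is the mate `a′` or `b′`.
-/

namespace SimpleGraph

variable {V : Type*} {G : SimpleGraph V} {x v c : V}

theorem setOf_not_adj_adj_adj_eq_commonNeighbors_sdiff (hxv : ¬G.Adj x v) (c : V) :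
    {w | (w ≠ x ∧ ¬G.Adj x w) ∧ G.Adj v w ∧ G.Adj w c} =
      G.commonNeighbors v c \ G.neighborSet x := by
  ext w
  simp only [Set.mem_ofPred_eq, Set.mem_sdiff, mem_commonNeighbors, mem_neighborSet]
  constructor
  · rintro ⟨⟨-, hxw⟩, hvw, hwc⟩
    exact ⟨⟨hvw, hwc.symm⟩, hxw⟩
  · rintro ⟨⟨hvw, hcw⟩, hxw⟩
    exact ⟨⟨by rintro rfl; exact hxv hvw.symm, hxw⟩, hvw, hcw.symm⟩

namespace IsSRGWith

variable [Fintype V] [DecidableRel G.Adj] {n k ℓ μ : ℕ}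

theorem ncard_commonNeighbors_of_adj (h : G.IsSRGWith n k ℓ μ) (hxv : G.Adj x v) :
    (G.commonNeighbors x v).ncard = ℓ := by
  rw [Set.ncard_eq_toFinset_card', Set.toFinset_card, h.of_adj x v hxv]

theorem ncard_commonNeighbors_of_not_adj (h : G.IsSRGWith n k ℓ μ) (hne : x ≠ v)
    (hxv : ¬G.Adj x v) : (G.commonNeighbors x v).ncard = μ := by
  rw [Set.ncard_eq_toFinset_card', Set.toFinset_card, h.of_not_adj hne hxv]

theorem eq_of_mem_commonNeighbors (h : G.IsSRGWith n k 1 μ) (hxc : G.Adj x c) {d e : V}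
    (hd : d ∈ G.commonNeighbors x c) (he : e ∈ G.commonNeighbors x c) : d = e :=
  (Set.ncard_le_one (Set.toFinite _)).mp (h.ncard_commonNeighbors_of_adj hxc).le d hd e he

theorem existsUnique_adj_and_adj (h : G.IsSRGWith n k 1 μ) (hxc : G.Adj x c) :
    ∃! d, G.Adj x d ∧ G.Adj c d := by
  obtain ⟨d, hd⟩ := Set.ncard_eq_one.mp (h.ncard_commonNeighbors_of_adj hxc)
  have hd' : d ∈ G.commonNeighbors x c := hd ▸ rfl
  exact ⟨d, hd', fun e he => Set.mem_singleton_iff.mp (hd ▸ he)⟩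

/-- If `d ~ e` were an edge, `x` and `v` would both complete it to a triangle. -/
theorem not_adj_of_mem_commonNeighbors (h : G.IsSRGWith n k 1 μ) (hxv : x ≠ v) {d e : V}
    (hd : d ∈ G.commonNeighbors x v) (he : e ∈ G.commonNeighbors x v) : ¬G.Adj d e :=
  fun hde => hxv (h.eq_of_mem_commonNeighbors hde ⟨hd.1.symm, he.1.symm⟩ ⟨hd.2.symm, he.2.symm⟩)

theorem ncard_commonNeighbors_sdiff_neighborSet_of_mem (h : G.IsSRGWith n k 1 μ) (hxv : x ≠ v)
    (hc : c ∈ G.commonNeighbors x v) :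
    (G.commonNeighbors v c \ G.neighborSet x).ncard = 1 := by
  have hdiff : G.commonNeighbors v c \ G.neighborSet x = G.commonNeighbors v c :=
    (Set.disjoint_left.mpr fun w hw hxw =>
      h.not_adj_of_mem_commonNeighbors hxv ⟨hxw, hw.1⟩ hc hw.2.symm).sdiff_eq_left
  rw [hdiff, h.ncard_commonNeighbors_of_adj hc.2]

theorem ncard_commonNeighbors_sdiff_neighborSet_of_adj_mem (h : G.IsSRGWith n k 1 2)
    (hne : x ≠ v) (hxv : ¬G.Adj x v) {a : V} (ha : a ∈ G.commonNeighbors x v)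
    (hxc : G.Adj x c) (hac : G.Adj a c) :
    (G.commonNeighbors v c \ G.neighborSet x).ncard = 1 := by
  have hvc : ¬G.Adj v c := fun hvc => h.not_adj_of_mem_commonNeighbors hne ha ⟨hxc, hvc⟩ hac
  have hvc' : v ≠ c := by
    rintro rfl
    exact hxv hxc
  have hdiff : G.commonNeighbors v c \ G.neighborSet x = G.commonNeighbors v c \ {a} := by
    ext w
    simp only [Set.mem_sdiff, mem_neighborSet, Set.mem_singleton_iff, and_congr_right_iff]
    refine fun hw => ⟨fun hxw hwa => hxw (hwa ▸ ha.1), fun hwa hxw => hwa ?_⟩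
    exact h.eq_of_mem_commonNeighbors hxc ⟨hxw, hw.2⟩ ⟨ha.1, hac.symm⟩
  rw [hdiff, Set.ncard_sdiff_singleton_of_mem (show a ∈ G.commonNeighbors v c from ⟨ha.2, hac.symm⟩),
    h.ncard_commonNeighbors_of_not_adj hvc' hvc]

theorem ncard_commonNeighbors_sdiff_neighborSet_of_forall_not_adj (h : G.IsSRGWith n k ℓ 2)
    (hxv : ¬G.Adj x v) (hxc : G.Adj x c) (hvc : ¬G.Adj v c)
    (hc : ∀ w ∈ G.commonNeighbors x v, ¬G.Adj w c) :
    (G.commonNeighbors v c \ G.neighborSet x).ncard = 2 := by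
  have hvc' : v ≠ c := by
    rintro rfl
    exact hxv hxc
  have hdiff : G.commonNeighbors v c \ G.neighborSet x = G.commonNeighbors v c :=
    (Set.disjoint_left.mpr fun w hw hxw => hc w ⟨hxw, hw.1⟩ hw.2.symm).sdiff_eq_left
  rw [hdiff, h.ncard_commonNeighbors_of_not_adj hvc' hvc]

end IsSRGWith

end SimpleGraph

open SimpleGraph

/-- Let `Γ` be a Conway 99-graph, `x` a vertex and `v ∈ Γ₂(x)`. Then `v` has
exactly two neighbors `a, b` in `Γ₁(x)`; every vertex of `Γ₁(x)` has a unique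
neighbor inside `Γ₁(x)` (the induced graph on `Γ₁(x)` is a perfect matching);
and, with `a′, b′` the matching-mates of `a` and `b`, among the 12 neighbors of
`v` in `Γ₂(x)`: for each `c ∈ {a, a′, b, b′}` exactly one is adjacent to `c`, and
for each other `c ∈ Γ₁(x)` exactly two are adjacent to `c`. -/
theorem stmt_15 {V : Type*} [Fintype V] (G : SimpleGraph V) [DecidableRel G.Adj]
    (h : G.IsSRGWith 99 14 1 2)
    (x v : V) (hv : v ≠ x ∧ ¬G.Adj x v) :
    ∃ a b : V, a ≠ b ∧ {c : V | G.Adj x c ∧ G.Adj v c} = {a, b} ∧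
      (∀ c : V, G.Adj x c → ∃! d : V, G.Adj x d ∧ G.Adj c d) ∧
      (∀ a' b' : V, G.Adj x a' → G.Adj a a' → G.Adj x b' → G.Adj b b' →
        ((∀ c ∈ ({a, a', b, b'} : Set V),
            Set.ncard {w : V | (w ≠ x ∧ ¬G.Adj x w) ∧ G.Adj v w ∧ G.Adj w c} = 1) ∧
          (∀ c : V, G.Adj x c → c ∉ ({a, a', b, b'} : Set V) →
            Set.ncard {w : V | (w ≠ x ∧ ¬G.Adj x w) ∧ G.Adj v w ∧ G.Adj w c} = 2))) := by
  obtain ⟨hvx, hxv⟩ := hv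
  obtain ⟨a, b, hab, hcn⟩ :=
    Set.ncard_eq_two.mp (h.ncard_commonNeighbors_of_not_adj hvx.symm hxv)
  have ha : a ∈ G.commonNeighbors x v := hcn ▸ Set.mem_insert a {b}
  have hb : b ∈ G.commonNeighbors x v := hcn ▸ Set.mem_insert_of_mem a rfl
  refine ⟨a, b, hab, hcn, fun c hxc => h.existsUnique_adj_and_adj hxc, ?_⟩
  intro a' b' hxa' haa' hxb' hbb'
  simp only [setOf_not_adj_adj_adj_eq_commonNeighbors_sdiff hxv]
  refine ⟨?_, fun c hxc hc => ?_⟩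
  · rintro c (rfl | rfl | rfl | rfl)
    · exact h.ncard_commonNeighbors_sdiff_neighborSet_of_mem hvx.symm ha
    · exact h.ncard_commonNeighbors_sdiff_neighborSet_of_adj_mem hvx.symm hxv ha hxa' haa'
    · exact h.ncard_commonNeighbors_sdiff_neighborSet_of_mem hvx.symm hb
    · exact h.ncard_commonNeighbors_sdiff_neighborSet_of_adj_mem hvx.symm hxv hb hxb' hbb'
  simp only [Set.mem_insert_iff, Set.mem_singleton_iff, not_or] at hc
  obtain ⟨hca, hca', hcb, hcb'⟩ := hc
  refine h.ncard_commonNeighbors_sdiff_neighborSet_of_forall_not_adj hxv hxc ?_ ?_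
  · intro hvc
    rcases (hcn ▸ ⟨hxc, hvc⟩ : c ∈ ({a, b} : Set V)) with rfl | rfl
    exacts [hca rfl, hcb rfl]
  · rw [hcn]
    rintro w (rfl | rfl) hwc
    · exact hca' (h.eq_of_mem_commonNeighbors ha.1 ⟨hxc, hwc⟩ ⟨hxa', haa'⟩)
    · exact hcb' (h.eq_of_mem_commonNeighbors hb.1 ⟨hxc, hwc⟩ ⟨hxb', hbb'⟩)
end

section
/- Let Γ be a Conway 99-graph and let x be a vertex of Γ. Then for every v ∈ Γ₂(x), there are exactly two vertices w ∈ Γ₂(x) such that w is adjacent to v and v and w have a common neighbor lying in Γ₁(x). (Equivalently: the spanning subgraph of the second subconstituent whose edges are those edges of Γ₂(x) lying on a triangle with third vertex in Γ₁(x) is 2-regular.) -/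
/-- In a Conway 99-graph, for every vertex `x` and every `v ∈ Γ₂(x)`, there are
exactly two vertices `w ∈ Γ₂(x)` adjacent to `v` such that `v` and `w` have a
common neighbor in `Γ₁(x)`: the spanning subgraph of the second subconstituent
whose edges lie on a triangle with third vertex in `Γ₁(x)` is 2-regular. -/
theorem stmt_18 {V : Type*} [Fintype V] (G : SimpleGraph V) [DecidableRel G.Adj]
    (h : G.IsSRGWith 99 14 1 2) (x : V) :
    ∀ v : V, v ≠ x → ¬G.Adj x v →
      Set.ncard {w : V | (w ≠ x ∧ ¬G.Adj x w) ∧ G.Adj v w ∧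
        ∃ u : V, G.Adj x u ∧ G.Adj v u ∧ G.Adj w u} = 2 := by
  intro v hvx hxv
  classical
  have hxv' : x ≠ v := fun e => hvx e.symm
  -- exactly two common neighbors of x and v
  have hμ : (G.commonNeighbors x v).toFinset.card = 2 := by
    rw [Set.toFinset_card]; exact h.of_not_adj hxv' hxv
  obtain ⟨u₁, u₂, hu12, hU⟩ := Finset.card_eq_two.mp hμ
  have hu₁ : u₁ ∈ G.commonNeighbors x v := by
    rw [← Set.mem_toFinset, hU]; simp
  have hu₂ : u₂ ∈ G.commonNeighbors x v := by
    rw [← Set.mem_toFinset, hU]; simp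
  rw [SimpleGraph.mem_commonNeighbors] at hu₁ hu₂
  have hmemU : ∀ u, G.Adj x u → G.Adj v u → u = u₁ ∨ u = u₂ := by
    intro u hxu hvu
    have hm : u ∈ (G.commonNeighbors x v).toFinset := by
      rw [Set.mem_toFinset, SimpleGraph.mem_commonNeighbors]
      exact ⟨hxu, hvu⟩
    rw [hU] at hm
    simpa using hm
  -- unique common neighbor of v and each uᵢ
  have hlam : ∀ u, G.Adj v u → ∃ w, (G.commonNeighbors v u).toFinset = {w} := by
    intro u hu
    apply Finset.card_eq_one.mp
    rw [Set.toFinset_card]; exact h.of_adj v u hu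
  obtain ⟨w₁, hW₁⟩ := hlam u₁ hu₁.2
  obtain ⟨w₂, hW₂⟩ := hlam u₂ hu₂.2
  have hw₁ : G.Adj v w₁ ∧ G.Adj u₁ w₁ := by
    have : w₁ ∈ (G.commonNeighbors v u₁).toFinset := by rw [hW₁]; simp
    rw [Set.mem_toFinset, SimpleGraph.mem_commonNeighbors] at this; exact this
  have hw₂ : G.Adj v w₂ ∧ G.Adj u₂ w₂ := by
    have : w₂ ∈ (G.commonNeighbors v u₂).toFinset := by rw [hW₂]; simp
    rw [Set.mem_toFinset, SimpleGraph.mem_commonNeighbors] at this; exact this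
  -- u₁ and u₂ are not adjacent
  have hu12adj : ¬ G.Adj u₁ u₂ := by
    intro hadj
    have hc : (G.commonNeighbors u₁ u₂).toFinset.card = 1 := by
      rw [Set.toFinset_card]; exact h.of_adj u₁ u₂ hadj
    obtain ⟨z, hz⟩ := Finset.card_eq_one.mp hc
    have hx : x ∈ (G.commonNeighbors u₁ u₂).toFinset := by
      rw [Set.mem_toFinset, SimpleGraph.mem_commonNeighbors]
      exact ⟨hu₁.1.symm, hu₂.1.symm⟩
    have hv : v ∈ (G.commonNeighbors u₁ u₂).toFinset := by
      rw [Set.mem_toFinset, SimpleGraph.mem_commonNeighbors]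
      exact ⟨hu₁.2.symm, hu₂.2.symm⟩
    rw [hz] at hx hv
    simp only [Finset.mem_singleton] at hx hv
    exact hxv' (hx.trans hv.symm)
  -- wᵢ ∈ Γ₂(x)
  have hnotadj : ∀ w u, G.Adj v w → G.Adj u w → u = u₁ ∨ u = u₂ → w ≠ x ∧ ¬ G.Adj x w := by
    intro w u hvw huw hu
    constructor
    · rintro rfl; exact hxv hvw.symm
    · intro hxw
      rcases hmemU w hxw hvw with rfl | rfl
      · rcases hu with rfl | rfl
        · exact G.irrefl huw
        · exact hu12adj huw.symm
      · rcases hu with rfl | rfl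
        · exact hu12adj huw
        · exact G.irrefl huw
  -- w₁ ≠ w₂
  have hw12 : w₁ ≠ w₂ := by
    rintro rfl
    have hc : (G.commonNeighbors v w₁).toFinset.card = 1 := by
      rw [Set.toFinset_card]; exact h.of_adj v w₁ hw₁.1
    obtain ⟨z, hz⟩ := Finset.card_eq_one.mp hc
    have h1 : u₁ ∈ (G.commonNeighbors v w₁).toFinset := by
      rw [Set.mem_toFinset, SimpleGraph.mem_commonNeighbors]
      exact ⟨hu₁.2, hw₁.2.symm⟩
    have h2 : u₂ ∈ (G.commonNeighbors v w₁).toFinset := by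
      rw [Set.mem_toFinset, SimpleGraph.mem_commonNeighbors]
      exact ⟨hu₂.2, hw₂.2.symm⟩
    rw [hz] at h1 h2
    simp only [Finset.mem_singleton] at h1 h2
    exact hu12 (h1.trans h2.symm)
  -- the set is {w₁, w₂}
  have hset : {w : V | (w ≠ x ∧ ¬G.Adj x w) ∧ G.Adj v w ∧
      ∃ u : V, G.Adj x u ∧ G.Adj v u ∧ G.Adj w u} = {w₁, w₂} := by
    ext w
    simp only [Set.mem_setOf_eq, Set.mem_insert_iff, Set.mem_singleton_iff]
    constructor
    · rintro ⟨-, hvw, u, hxu, hvu, hwu⟩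
      rcases hmemU u hxu hvu with he | he
      · left
        have hm : w ∈ (G.commonNeighbors v u₁).toFinset := by
          rw [Set.mem_toFinset, SimpleGraph.mem_commonNeighbors]
          exact ⟨hvw, he ▸ hwu.symm⟩
        rw [hW₁] at hm; simpa using hm
      · right
        have hm : w ∈ (G.commonNeighbors v u₂).toFinset := by
          rw [Set.mem_toFinset, SimpleGraph.mem_commonNeighbors]
          exact ⟨hvw, he ▸ hwu.symm⟩
        rw [hW₂] at hm; simpa using hm
    · rintro (rfl | rfl)
      · exact ⟨hnotadj w u₁ hw₁.1 hw₁.2 (Or.inl rfl), hw₁.1,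
          u₁, hu₁.1, hu₁.2, hw₁.2.symm⟩
      · exact ⟨hnotadj w u₂ hw₂.1 hw₂.2 (Or.inr rfl), hw₂.1,
          u₂, hu₂.1, hu₂.2, hw₂.2.symm⟩
  rw [hset]
  exact Set.ncard_pair hw12
end
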